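/- arXiv:nlin/0411044 — 2 statements merged into one kernel-verified Lean document; each statement's English description precedes it below -/
import Mathlib

section
/- Lemma A.3, Switch_{12} case: let n ≥ 4 be even and x, y ∈ (ℝ_{>0})^n (indices modulo n). Let ī denote the involution pairing (1,2), (3,4), …, (n−1,n), i.e. ī = i+1 for i odd and ī = i−1 for i even. Set α_i = x_i + y_ī, x**_i = x_ī·α_{ī+1}/α_ī and y**_i = y_ī·α_{i+1}/α_i. Then Q_i(x**, y**) = Q_i(x,y) for every even i, and Q_i(x**, y**) = (x_{i+1}+y_i)·(x_i·Q_{i+1}(x,y) + y_{i+1}·Q_{i−1}(x,y)) / ((x_i+y_{i+1})·(x_{i+2}+y_{i+3})) for every odd i. -/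
/- Tropical (geometric-lift) setting for the combinatorial R- and K-matrices of
Kuniba–Okado–Yamada, "Box-Ball System with Reflecting End", Appendix A.
Vectors are real-valued, indexed by `ZMod n` (coordinates modulo `n`), and
`Qr x y i` is the subtraction-free polynomial
`Q_i(x,y) = Σ_{k=1}^{n} (Π_{j=1}^{k−1} x_{i+j}) (Π_{j=k+1}^{n} y_{i+j})`,
the geometric lift (by `(min,+) → (+,×)`) of the piecewise-linear energy. -/

namespace BBST

abbrev W (n : ℕ) := ZMod n → ℝ

variable {n : ℕ}

/-- The tropical energy polynomial
`Q_i(x,y) = Σ_{k=1}^{n} (Π_{j=1}^{k−1} x_{i+j}) · (Π_{j=k+1}^{n} y_{i+j})`. -/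
def Qr (x y : W n) (i : ZMod n) : ℝ :=
  ∑ k ∈ Finset.range n,
    (∏ j ∈ Finset.range k, x (i + (j : ZMod n) + 1)) *
      ∏ j ∈ Finset.Ico (k + 1) n, y (i + (j : ZMod n) + 1)

end BBST

/-! Put `M_j = !![y_j, 0; 1, x_j]`. The product `T_i = M_{i+1} ⋯ M_{i+n}` is lower triangular
with diagonal `∏ y, ∏ x` and lower-left entry `Q_i(x, y)`.

For odd `j` the switch rescales consecutive pairs:
`α_j • M**_j M**_{j+1} = α_{j+2} • M_j M_{j+1}`.
Starting from an even `i`, the pairs tile the circle and the scalars telescope, so `T**_i = T_i`;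
this gives the even case and also `∏ x** = ∏ x`, `∏ y** = ∏ y`.

Comparing lower-left entries in `M_{i+1} T_{i+1} = T_i M_{i+1}` gives the recurrence
`∏ y + x_{i+1} Q_{i+1} = Q_i y_{i+1} + ∏ x`. For odd `i`, this recurrence for `(x**, y**)` at
`i`, where everything but `Q**_i` is already known, combined with the recurrences for `(x, y)`
at `i` and `i - 1`, determines `Q**_i`. -/

namespace BBST

open Finset

variable {n : ℕ}

def transfer (x y : W n) (j : ZMod n) : Matrix (Fin 2) (Fin 2) ℝ := !![y j, 0; 1, x j]

def monodromy (x y : W n) (i : ZMod n) : ℕ → Matrix (Fin 2) (Fin 2) ℝ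
  | 0 => 1
  | m + 1 => monodromy x y i m * transfer x y (i + m + 1)

section Monodromy

variable (x y : W n) (i : ZMod n)

theorem monodromy_eq (m : ℕ) :
    monodromy x y i m =
      !![∏ j ∈ range m, y (i + j + 1), 0;
         ∑ k ∈ range m,
           (∏ j ∈ range k, x (i + j + 1)) * ∏ j ∈ Ico (k + 1) m, y (i + j + 1),
         ∏ j ∈ range m, x (i + j + 1)] := by
  induction m with
  | zero => simp [monodromy, Matrix.one_fin_two]
  | succ m ih =>
    have hsum : ∑ k ∈ range (m + 1),
          (∏ j ∈ range k, x (i + j + 1)) * ∏ j ∈ Ico (k + 1) (m + 1), y (i + j + 1) =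
        (∑ k ∈ range m,
          (∏ j ∈ range k, x (i + j + 1)) * ∏ j ∈ Ico (k + 1) m, y (i + j + 1)) *
            y (i + m + 1) + ∏ j ∈ range m, x (i + j + 1) := by
      rw [sum_range_succ, sum_mul, Ico_self, prod_empty, mul_one]
      congr 1
      refine sum_congr rfl fun k hk => ?_
      rw [prod_Ico_succ_top (by simpa using hk), mul_assoc]
    rw [monodromy, ih, transfer, Matrix.mul_fin_two, hsum, prod_range_succ, prod_range_succ]
    simp

theorem transfer_mul_monodromy (m : ℕ) :
    transfer x y (i + 1) * monodromy x y (i + 1) m = monodromy x y i (m + 1) := by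
  induction m with
  | zero => simp [monodromy]
  | succ m ih =>
    rw [monodromy, ← mul_assoc, ih, monodromy.eq_2 x y i (m + 1)]
    congr 2
    push_cast
    ring

theorem transfer_mul_monodromy_comm :
    transfer x y (i + 1) * monodromy x y (i + 1) n = monodromy x y i n * transfer x y (i + 1) := by
  rw [transfer_mul_monodromy, monodromy, ZMod.natCast_self, add_zero]

theorem prod_range_add_natCast_add_one {M : Type*} [CommMonoid M] [NeZero n] (f : ZMod n → M) :
    ∏ j ∈ range n, f (i + j + 1) = ∏ k, f k := by
  have hcast : ∏ j ∈ range n, f (i + j + 1) = ∏ k : ZMod n, f (i + k + 1) := by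
    refine prod_nbij (↑) (by simp) ?_ ?_ (fun _ _ => rfl)
    · intro a ha b hb hab
      simpa [ZMod.val_natCast_of_lt (mem_range.1 ha),
        ZMod.val_natCast_of_lt (mem_range.1 hb)] using congrArg ZMod.val hab
    · intro k _
      exact ⟨k.val, by simp [ZMod.val_lt], by simp⟩
  rw [hcast]
  exact Fintype.prod_equiv ((Equiv.addLeft i).trans (Equiv.addRight 1)) _ _ fun _ => rfl

theorem monodromy_self [NeZero n] :
    monodromy x y i n = !![∏ k, y k, 0; Qr x y i, ∏ k, x k] := by
  rw [monodromy_eq, prod_range_add_natCast_add_one, prod_range_add_natCast_add_one, Qr]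

theorem Qr_recurrence [NeZero n] :
    ∏ k, y k + x (i + 1) * Qr x y (i + 1) = Qr x y i * y (i + 1) + ∏ k, x k := by
  simpa [transfer, monodromy_self] using
    congrFun (congrFun (transfer_mul_monodromy_comm x y i) 1) 0

end Monodromy

theorem val_add_natCast_mod_of_dvd [NeZero n] {d : ℕ} (hd : d ∣ n) (i : ZMod n) (k : ℕ) :
    (i + k).val % d = (i.val + k) % d := by
  rw [ZMod.val_add, ZMod.val_natCast, Nat.mod_mod_of_dvd _ hd, Nat.add_mod, Nat.mod_mod_of_dvd _ hd,
    ← Nat.add_mod]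

section Parity

variable [NeZero n] (hn : Even n) {i : ZMod n}
include hn

theorem val_add_one_mod_two_eq_zero (hi : i.val % 2 = 1) : (i + 1).val % 2 = 0 := by
  have h := val_add_natCast_mod_of_dvd hn.two_dvd i 1
  rw [Nat.cast_one] at h
  omega

theorem val_add_two_mod_two_eq_one (hi : i.val % 2 = 1) : (i + 2).val % 2 = 1 := by
  have h := val_add_natCast_mod_of_dvd hn.two_dvd i 2
  rw [Nat.cast_ofNat] at h
  omega

theorem val_add_odd_mod_two_eq_one (hi : i.val % 2 = 0) (k : ℕ) :
    (i + (2 * k + 1 : ℕ)).val % 2 = 1 := by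
  rw [val_add_natCast_mod_of_dvd hn.two_dvd]; omega

end Parity

noncomputable section Switch

variable (x y : W n)

-- `pairing`, `switchSum`, `switchX`, `switchY` are the paper's `ī`, `α`, `x**`, `y**`.
def pairing (i : ZMod n) : ZMod n := if i.val % 2 = 1 then i + 1 else i - 1

def switchSum (i : ZMod n) : ℝ := x i + y (pairing i)

def switchX (i : ZMod n) : ℝ :=
  x (pairing i) * switchSum x y (pairing i + 1) / switchSum x y (pairing i)

def switchY (i : ZMod n) : ℝ := y (pairing i) * switchSum x y (i + 1) / switchSum x y i

variable {x y} {j : ZMod n} (hj : j.val % 2 = 1)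
include hj

theorem pairing_of_odd : pairing j = j + 1 := if_pos hj

theorem switchSum_of_odd : switchSum x y j = x j + y (j + 1) := by
  rw [switchSum, pairing_of_odd hj]

theorem switchX_of_odd :
    switchX x y j = x (j + 1) * switchSum x y (j + 2) / switchSum x y (j + 1) := by
  rw [switchX, pairing_of_odd hj, add_assoc, one_add_one_eq_two]

theorem switchY_of_odd :
    switchY x y j = y (j + 1) * switchSum x y (j + 1) / switchSum x y j := by
  rw [switchY, pairing_of_odd hj]

variable [NeZero n] (hn : Even n)
include hn

theorem pairing_add_one_of_odd : pairing (j + 1) = j := by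
  rw [pairing, if_neg (by rw [val_add_one_mod_two_eq_zero hn hj]; omega), add_sub_cancel_right]

theorem switchSum_add_one_of_odd : switchSum x y (j + 1) = x (j + 1) + y j := by
  rw [switchSum, pairing_add_one_of_odd hj hn]

theorem switchX_add_one_of_odd :
    switchX x y (j + 1) = x j * switchSum x y (j + 1) / switchSum x y j := by
  rw [switchX, pairing_add_one_of_odd hj hn]

theorem switchY_add_one_of_odd :
    switchY x y (j + 1) = y j * switchSum x y (j + 2) / switchSum x y (j + 1) := by
  rw [switchY, pairing_add_one_of_odd hj hn, add_assoc, one_add_one_eq_two]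

theorem smul_transfer_switch_mul_of_odd (hα : ∀ i, switchSum x y i ≠ 0) :
    switchSum x y j • (transfer (switchX x y) (switchY x y) j *
        transfer (switchX x y) (switchY x y) (j + 1)) =
      switchSum x y (j + 2) • (transfer x y j * transfer x y (j + 1)) := by
  have h0 := hα j
  have h1 := hα (j + 1)
  rw [switchSum_of_odd hj] at h0
  rw [switchSum_add_one_of_odd hj hn] at h1
  rw [transfer, transfer, transfer, transfer, switchX_of_odd hj, switchY_of_odd hj,
    switchX_add_one_of_odd hj hn, switchY_add_one_of_odd hj hn, switchSum_add_one_of_odd hj hn,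
    switchSum_of_odd hj]
  ext a b
  fin_cases a <;> fin_cases b <;> simp
  all_goals field_simp
  ring

end Switch

theorem smul_monodromy_two_mul {x y x' y' : W n} {c : ZMod n → ℝ} {i : ZMod n}
    (hpair : ∀ k : ℕ, let j := i + (2 * k + 1 : ℕ)
      c j • (transfer x' y' j * transfer x' y' (j + 1)) =
        c (j + 2) • (transfer x y j * transfer x y (j + 1)))
    (m : ℕ) :
    c (i + 1) • monodromy x' y' i (2 * m) =
      c (i + (2 * m : ℕ) + 1) • monodromy x y i (2 * m) := by
  induction m with
  | zero => simp [monodromy]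
  | succ m ih =>
    set j : ZMod n := i + (2 * m + 1 : ℕ) with hj_def
    have hstep (x y : W n) :
        monodromy x y i (2 * (m + 1)) =
          monodromy x y i (2 * m) * (transfer x y j * transfer x y (j + 1)) := by
      rw [show 2 * (m + 1) = 2 * m + 1 + 1 by ring, monodromy, monodromy, mul_assoc]
      congr 3; rw [hj_def]; push_cast; ring
    have hj : i + (2 * m : ℕ) + 1 = j := by rw [hj_def]; push_cast; ring
    have hj' : i + (2 * (m + 1) : ℕ) + 1 = j + 2 := by rw [hj_def]; push_cast; ring
    calc c (i + 1) • monodromy x' y' i (2 * (m + 1))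
        = (c (i + 1) • monodromy x' y' i (2 * m)) *
            (transfer x' y' j * transfer x' y' (j + 1)) := by
          rw [hstep, smul_mul_assoc]
      _ = monodromy x y i (2 * m) * (c j • (transfer x' y' j * transfer x' y' (j + 1))) := by
          rw [ih, hj, smul_mul_assoc, mul_smul_comm]
      _ = c (i + (2 * (m + 1) : ℕ) + 1) • monodromy x y i (2 * (m + 1)) := by
          rw [hpair m, mul_smul_comm, hstep, hj']

section SwitchQ

variable {x y : W n} [NeZero n] (hn : Even n) (hα : ∀ i, switchSum x y i ≠ 0)
include hn hα

theorem monodromy_switch_of_even {i : ZMod n} (hi : i.val % 2 = 0) :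
    monodromy (switchX x y) (switchY x y) i n = monodromy x y i n := by
  have h := smul_monodromy_two_mul (c := switchSum x y) (i := i)
    (fun k => smul_transfer_switch_mul_of_odd (val_add_odd_mod_two_eq_one hn hi k) hn hα) (n / 2)
  rw [Nat.mul_div_cancel' hn.two_dvd, ZMod.natCast_self, add_zero] at h
  exact smul_right_injective _ (hα (i + 1)) h

theorem Qr_switch_of_even {i : ZMod n} (hi : i.val % 2 = 0) :
    Qr (switchX x y) (switchY x y) i = Qr x y i := by
  simpa [monodromy_self] using congrFun (congrFun (monodromy_switch_of_even hn hα hi) 1) 0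

theorem prod_switchX : ∏ k, switchX x y k = ∏ k, x k := by
  simpa [monodromy_self] using
    congrFun (congrFun (monodromy_switch_of_even hn hα (i := 0) (by simp)) 1) 1

theorem prod_switchY : ∏ k, switchY x y k = ∏ k, y k := by
  simpa [monodromy_self] using
    congrFun (congrFun (monodromy_switch_of_even hn hα (i := 0) (by simp)) 0) 0

theorem Qr_switch_of_odd {i : ZMod n} (hi : i.val % 2 = 1) (hy : y i ≠ 0) :
    Qr (switchX x y) (switchY x y) i =
      (x (i + 1) + y i) * (x i * Qr x y (i + 1) + y (i + 1) * Qr x y (i - 1)) /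
        ((x i + y (i + 1)) * (x (i + 2) + y (i + 3))) := by
  have hr := Qr_recurrence x y i
  have hr' := Qr_recurrence x y (i - 1)
  rw [sub_add_cancel] at hr'
  have hs := Qr_recurrence (switchX x y) (switchY x y) i
  rw [Qr_switch_of_even hn hα (val_add_one_mod_two_eq_zero hn hi), prod_switchX hn hα,
    prod_switchY hn hα, switchX_add_one_of_odd hi hn, switchY_add_one_of_odd hi hn] at hs
  have h0 := hα i
  have h1 := hα (i + 1)
  have h2 := hα (i + 2)
  rw [← switchSum_of_odd hi, ← switchSum_add_one_of_odd hi hn,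
    show i + 3 = i + 2 + 1 by ring, ← switchSum_of_odd (val_add_two_mod_two_eq_one hn hi),
    eq_div_iff (mul_ne_zero h0 h2)]
  field_simp at hs
  refine mul_left_cancel₀ hy ?_
  rw [switchSum_of_odd hi, switchSum_add_one_of_odd hi hn] at hs ⊢
  linear_combination -hs + (x (i + 1) + y i) * x i * hr + (x (i + 1) + y i) * y (i + 1) * hr'

end SwitchQ

/-- Lemma A.3, Switch₁₂ case: let `n ≥ 4` be even and
`x, y ∈ (ℝ_{>0})^n`.  With the involution `ī` pairing `(1,2), (3,4), …, (n−1,n)`,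
`α_i = x_i + y_ī`, `x**_i = x_ī·α_{ī+1}/α_ī` and `y**_i = y_ī·α_{i+1}/α_i`, one has
`Q_i(x**, y**) = Q_i(x,y)` for every even `i`, and
`Q_i(x**, y**) = (x_{i+1}+y_i)·(x_i·Q_{i+1} + y_{i+1}·Q_{i−1}) / ((x_i+y_{i+1})·(x_{i+2}+y_{i+3}))`
for every odd `i`. -/
theorem lemmaA3_switch12 (n : ℕ) (hn : 4 ≤ n) (hev : Even n) (x y : W n)
    (hx : ∀ i, 0 < x i) (hy : ∀ i, 0 < y i)
    (bar : ZMod n → ZMod n) (hbar : bar = fun i => if i.val % 2 = 1 then i + 1 else i - 1)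
    (α : ZMod n → ℝ) (hα : α = fun i => x i + y (bar i))
    (xss yss : W n)
    (hxss : xss = fun i => x (bar i) * α (bar i + 1) / α (bar i))
    (hyss : yss = fun i => y (bar i) * α (i + 1) / α i) :
    (∀ i : ZMod n, i.val % 2 = 0 → Qr xss yss i = Qr x y i) ∧
      ∀ i : ZMod n, i.val % 2 = 1 →
        Qr xss yss i =
          (x (i + 1) + y i) * (x i * Qr x y (i + 1) + y (i + 1) * Qr x y (i - 1)) /
            ((x i + y (i + 1)) * (x (i + 2) + y (i + 3))) := by
  have : NeZero n := ⟨by omega⟩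
  subst hxss hyss hα hbar
  have hα : ∀ i, switchSum x y i ≠ 0 := fun i => (add_pos (hx i) (hy _)).ne'
  exact ⟨fun i => Qr_switch_of_even hev hα, fun i hi => Qr_switch_of_odd hev hα hi (hy i).ne'⟩

end BBST
end

section
/- Closed forms for the tropical left-hand reflection composite in the Rotateleft case (appendix A.4): let n ≥ 3 and x, y ∈ (ℝ_{>0})^n (indices modulo n), write Q_i = Q_i(x,y), and define x'_i = x_i·Q_i/Q_{i−1}, y'_i = y_i·Q_{i−1}/Q_i, x''_i = x'_{i+1}, P_i = y'_{i+1} + x''_{i+1}, x'''_i = x''_i·P_i/P_{i−1}, y''_i = y'_i·P_i/P_{i−1}, and y'''_i = y''_{i+1}. Then for every i: x'''_i = x_{i+1}·(x_{i+1}+y_{i+2})·Q_{i+1} / ((x_i+y_{i+1})·Q_i) and y'''_i = y_{i+1}·(x_{i+2}+y_{i+3})·Q_i / ((x_{i+1}+y_{i+2})·Q_{i+1}). -/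
namespace BBST

variable {n : ℕ}

lemma rot_prod [NeZero n] (f : ZMod n → ℝ) (i : ZMod n) :
    ∏ j ∈ Finset.range n, f (i + (j : ZMod n) + 1) = ∏ j : ZMod n, f j := by
  refine Finset.prod_nbij' (fun j => i + (j : ZMod n) + 1) (fun z => (z - i - 1).val)
    (fun a _ => Finset.mem_univ _) (fun z _ => Finset.mem_range.2 (ZMod.val_lt _))
    ?_ ?_ (fun a _ => rfl)
  · intro a ha
    show ((i + (a : ZMod n) + 1) - i - 1).val = a
    have : ((i + (a : ZMod n) + 1) - i - 1) = (a : ZMod n) := by ring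
    rw [this, ZMod.val_cast_of_lt (Finset.mem_range.1 ha)]
  · intro z _
    show i + (((z - i - 1).val : ℕ) : ZMod n) + 1 = z
    rw [ZMod.natCast_zmod_val]; ring

lemma Qr_pos (hn : 0 < n) (x y : W n) (hx : ∀ i, 0 < x i) (hy : ∀ i, 0 < y i)
    (i : ZMod n) : 0 < Qr x y i := by
  apply Finset.sum_pos
  · intro k _
    exact mul_pos (Finset.prod_pos fun j _ => hx _) (Finset.prod_pos fun j _ => hy _)
  · exact Finset.nonempty_range_iff.2 (by omega)

lemma key [NeZero n] (hn : 3 ≤ n) (x y : W n) (i : ZMod n) :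
    x (i + 1) * Qr x y (i + 1) + ∏ j : ZMod n, y j
      = y (i + 1) * Qr x y i + ∏ j : ZMod n, x j := by
  obtain ⟨m, rfl⟩ : ∃ m, n = m + 1 := ⟨n - 1, by omega⟩
  set T : ZMod (m+1) → ℕ → ℝ := fun i k =>
    (∏ j ∈ Finset.range k, x (i + (j : ZMod (m+1)) + 1)) *
      ∏ j ∈ Finset.Ico (k + 1) (m+1), y (i + (j : ZMod (m+1)) + 1) with hT
  have hQ : ∀ i, Qr x y i = ∑ k ∈ Finset.range (m+1), T i k := fun _ => rfl
  have castsucc : ∀ j : ℕ, ((j + 1 : ℕ) : ZMod (m+1)) = (j : ZMod (m+1)) + 1 := by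
    intro j; push_cast; ring
  have gtop : ((m + 1 : ℕ) : ZMod (m+1)) = 0 := ZMod.natCast_self _
  -- step identity
  have step : ∀ k, k + 2 ≤ m + 1 → x (i+1) * T (i+1) k = y (i+1) * T i (k+1) := by
    intro k hk
    have hx1 : ∏ j ∈ Finset.range (k+1), x (i + (j : ZMod (m+1)) + 1)
        = (∏ j ∈ Finset.range k, x ((i+1) + (j : ZMod (m+1)) + 1)) * x (i + 1) := by
      rw [Finset.prod_range_succ']
      congr 1
      · apply Finset.prod_congr rfl; intro j _
        rw [castsucc]; ring_nf
      · norm_num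
    have hy1 : ∏ j ∈ Finset.Ico (k+1) (m+1), y ((i+1) + (j : ZMod (m+1)) + 1)
        = (∏ j ∈ Finset.Ico (k+2) (m+1), y (i + (j : ZMod (m+1)) + 1)) * y (i + 1) := by
      have e1 : ∀ j : ℕ, y ((i+1) + (j : ZMod (m+1)) + 1)
          = y (i + ((j+1 : ℕ) : ZMod (m+1)) + 1) := by
        intro j; rw [castsucc]; ring_nf
      rw [Finset.prod_congr rfl (fun j _ => e1 j)]
      rw [Finset.prod_Ico_eq_prod_range, Finset.prod_Ico_eq_prod_range]
      have h1 : m + 1 - (k+1) = (m + 1 - (k+2)) + 1 := by omega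
      rw [h1, Finset.prod_range_succ]
      congr 1
      · apply Finset.prod_congr rfl; intro r _
        have h2 : k + 1 + r + 1 = k + 2 + r := by omega
        rw [h2]
      · have : k + 1 + (m + 1 - (k+2)) + 1 = m + 1 := by omega
        rw [this, gtop]; norm_num
    rw [hT]
    simp only
    rw [hx1, hy1]
    ring
  -- boundary terms
  have top : x (i+1) * T (i+1) m = ∏ j : ZMod (m+1), x j := by
    rw [hT]; simp only [Finset.Ico_self, Finset.prod_empty, mul_one]
    rw [← rot_prod x i, Finset.prod_range_succ', mul_comm (x (i+1))]
    congr 1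
    · apply Finset.prod_congr rfl; intro j _
      rw [castsucc]; ring_nf
    · norm_num
  have bot : y (i+1) * T i 0 = ∏ j : ZMod (m+1), y j := by
    rw [hT]; simp only [Finset.range_zero, Finset.prod_empty, one_mul, zero_add]
    rw [← rot_prod y i, Finset.prod_range_succ', Finset.prod_Ico_eq_prod_range]
    simp only [Nat.add_sub_cancel]
    rw [mul_comm (y (i+1))]
    congr 1
    · apply Finset.prod_congr rfl; intro j _
      congr 2; push_cast; ring
    · norm_num
  have e1 : x (i+1) * Qr x y (i+1) = (∑ k ∈ Finset.range m, y (i+1) * T i (k+1)) + ∏ j : ZMod (m+1), x j := by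
    rw [hQ, Finset.mul_sum, Finset.sum_range_succ, top]
    congr 1
    apply Finset.sum_congr rfl; intro k hk
    exact step k (by have := Finset.mem_range.1 hk; omega)
  have e2 : y (i+1) * Qr x y i = (∑ k ∈ Finset.range m, y (i+1) * T i (k+1)) + ∏ j : ZMod (m+1), y j := by
    rw [hQ, Finset.mul_sum, Finset.sum_range_succ', bot]
  rw [e1, e2]; ring

/-- closed forms for the tropical left-hand reflection composite,
Rotateleft case, Appendix A.4: with `Q_i = Q_i(x,y)`, `x'_i = x_i·Q_i/Q_{i−1}`,
`y'_i = y_i·Q_{i−1}/Q_i`, `x''_i = x'_{i+1}`, `P_i = y'_{i+1} + x''_{i+1}`,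
`x'''_i = x''_i·P_i/P_{i−1}`, `y''_i = y'_i·P_i/P_{i−1}`, `y'''_i = y''_{i+1}`, one has
`x'''_i = x_{i+1}·(x_{i+1}+y_{i+2})·Q_{i+1}/((x_i+y_{i+1})·Q_i)` and
`y'''_i = y_{i+1}·(x_{i+2}+y_{i+3})·Q_i/((x_{i+1}+y_{i+2})·Q_{i+1})` for every `i`. -/
theorem tropical_left_composite_closed_form (n : ℕ) (hn : 3 ≤ n) (x y : W n)
    (hx : ∀ i, 0 < x i) (hy : ∀ i, 0 < y i)
    (x' y' x'' : W n) (Pp : ZMod n → ℝ) (x''' y'' y''' : W n)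
    (hx' : x' = fun i => x i * Qr x y i / Qr x y (i - 1))
    (hy' : y' = fun i => y i * Qr x y (i - 1) / Qr x y i)
    (hx'' : x'' = fun i => x' (i + 1))
    (hPp : Pp = fun i => y' (i + 1) + x'' (i + 1))
    (hx''' : x''' = fun i => x'' i * Pp i / Pp (i - 1))
    (hy'' : y'' = fun i => y' i * Pp i / Pp (i - 1))
    (hy''' : y''' = fun i => y'' (i + 1)) :
    ∀ i : ZMod n,
      x''' i =
          x (i + 1) * (x (i + 1) + y (i + 2)) * Qr x y (i + 1) /
            ((x i + y (i + 1)) * Qr x y i) ∧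
        y''' i =
          y (i + 1) * (x (i + 2) + y (i + 3)) * Qr x y i /
            ((x (i + 1) + y (i + 2)) * Qr x y (i + 1)) := by
  intro i
  haveI : NeZero n := ⟨by omega⟩
  have hQ : ∀ j, 0 < Qr x y j := Qr_pos (by omega) x y hx hy
  have hkey : ∀ j : ZMod n, x (j + 1) * Qr x y (j + 1) + ∏ t : ZMod n, y t
      = y (j + 1) * Qr x y j + ∏ t : ZMod n, x t := key hn x y
  have hP : ∀ j : ZMod n, Pp j = x (j + 1) + y (j + 2) := by
    intro j
    have h1 : (j + 1 : ZMod n) - 1 = j := by ring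
    have h2 : (j + 2 : ZMod n) - 1 = j + 1 := by ring
    have h3 : (j + 1 : ZMod n) + 1 = j + 2 := by ring
    have hk1 := hkey j
    have hk2 := hkey (j + 1)
    rw [h3] at hk2
    rw [hPp, hx'', hy', hx']
    simp only [h3, h1, h2]
    have hQj := hQ j
    have hQj1 := hQ (j + 1)
    have hQj2 := hQ (j + 2)
    field_simp
    nlinarith [hk1, hk2, hQ (j + 1)]
  constructor
  · have h4 : (i - 1 : ZMod n) + 1 = i := by ring
    have h5 : (i - 1 : ZMod n) + 2 = i + 1 := by ring
    have h6 : (i + 1 : ZMod n) - 1 = i := by ring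
    rw [hx''', hx'', hx']
    simp only [hP, h4, h5, h6]
    have := hQ i
    have := hQ (i + 1)
    have hd1 : 0 < x i + y (i + 1) := by have := hx i; have := hy (i + 1); linarith
    field_simp
  · have h4 : (i + 1 : ZMod n) - 1 = i := by ring
    have h5 : (i + 1 : ZMod n) + 1 = i + 2 := by ring
    have h6 : (i + 1 : ZMod n) + 2 = i + 3 := by ring
    rw [hy''', hy'', hy']
    simp only [hP, h4, h5, h6]
    have := hQ i
    have := hQ (i + 1)
    have hd1 : 0 < x (i + 1) + y (i + 2) := by have := hx (i + 1); have := hy (i + 2); linarith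
    field_simp


end BBST
end
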